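/- arXiv:1204.4429 — 2 statements merged into one kernel-verified Lean document; each statement's English description precedes it below -/
import Mathlib

section
/- Let μ be a finite nonnegative Borel measure on (ℝ^d)^k and γ > 0. Suppose that the Fourier transform of μ satisfies |μ̂(-ξ, ξ, 0, …, 0)| ≤ C(1+|ξ|)^{-γ} for all ξ ∈ ℝ^d. Then for any γ₁, γ₂ > 0 with γ₁ + γ₂ = γ and any nonnegative Schwartz functions f₁, …, f_k on ℝ^d, the multilinear convolution T_μ(f₁,…,f_k)(x) = ∫⋯∫ f₁(x-u¹)⋯f_k(x-u^k) dμ(u¹,…,u^k) satisfies ‖T_μ(f₁,…,f_k)‖_{L¹(ℝ^d)} ≲ (∏_{j=3}^k ‖f_j‖_∞) · (∫ |f̂₁(ξ)|² (1+|ξ|)^{-2γ₁} dξ)^{1/2} · (∫ |f̂₂(ξ)|² (1+|ξ|)^{-2γ₂} dξ)^{1/2}. -/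
open MeasureTheory
open scoped BigOperators

/-- `negExp r = e^{-2πir}`. -/
noncomputable def negExp (r : ℝ) : ℂ := Complex.exp (Complex.I * ((-2) * Real.pi * r : ℝ))

/-- The Fourier transform of a real-valued function on `ℝ^d`. -/
noncomputable def ftR {d : ℕ} (f : EuclideanSpace ℝ (Fin d) → ℝ)
    (ξ : EuclideanSpace ℝ (Fin d)) : ℂ :=
  ∫ x, negExp (inner ℝ x ξ : ℝ) * (f x : ℂ)

/-!
Bounding `f₃, …, f_k` by their suprema and applying Tonelli bounds `‖T_μ(f)‖₁` by
`(∏_{j≥3} ‖f_j‖_∞) ∫ ⟨f₁(· - u¹), f₂(· - u²)⟩ dμ(u)`. By Plancherel, the inner product of the two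
translates is `∫ conj(f̂₁(ξ)) f̂₂(ξ) e^{2πi(u¹-u²)·ξ} dξ`, so after Fubini the `u`-integral produces
exactly `μ̂(-ξ, ξ, 0, …, 0)`. Its decay, split as `(1+|ξ|)^{-γ₁} (1+|ξ|)^{-γ₂}`, and Cauchy–Schwarz
finish the proof.
-/

open Complex SchwartzMap
open scoped FourierTransform RealInnerProductSpace ComplexConjugate

theorem negExp_eq_fourierChar (r : ℝ) : negExp r = 𝐞 (-r) := by
  rw [Real.fourierChar_apply, negExp]
  congr 1
  push_cast
  ring

theorem ftR_eq_fourier {d : ℕ} (f : EuclideanSpace ℝ (Fin d) → ℝ) :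
    ftR f = 𝓕 (fun x => (f x : ℂ)) := by
  ext ξ
  simp [ftR, Real.fourier_eq, negExp_eq_fourierChar, Circle.smul_def, real_inner_comm]

theorem integral_integral_le_integral_integral_of_le {α β : Type*} [MeasurableSpace α]
    [MeasurableSpace β] {μ : Measure α} {ν : Measure β} [SFinite μ] [SFinite ν]
    {F : α → β → ℝ} {G : β → α → ℝ} (hF0 : ∀ x y, 0 ≤ F x y)
    (hF : AEStronglyMeasurable (Function.uncurry F) (μ.prod ν)) (hFG : ∀ x y, F x y ≤ G y x)
    (hG : ∀ y, Integrable (G y) μ) (hG' : Integrable (fun y => ∫ x, G y x ∂μ) ν) :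
    ∫ x, (∫ y, F x y ∂ν) ∂μ ≤ ∫ y, (∫ x, G y x ∂μ) ∂ν := by
  have hG0 : ∀ y x, 0 ≤ G y x := fun y x => (hF0 x y).trans (hFG x y)
  rw [integral_eq_lintegral_of_nonneg_ae (ae_of_all _ fun x => integral_nonneg (hF0 x))
    hF.integral_prod_right']
  refine ENNReal.toReal_le_of_le_ofReal (integral_nonneg fun y => integral_nonneg (hG0 y)) ?_
  calc ∫⁻ x, ENNReal.ofReal (∫ y, F x y ∂ν) ∂μ
      ≤ ∫⁻ x, ∫⁻ y, ENNReal.ofReal (F x y) ∂ν ∂μ := lintegral_mono fun x => by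
        simpa only [Real.enorm_of_nonneg (integral_nonneg (hF0 x)), Real.enorm_of_nonneg (hF0 x _)]
          using enorm_integral_le_lintegral_enorm (F x)
    _ = ∫⁻ y, ∫⁻ x, ENNReal.ofReal (F x y) ∂μ ∂ν :=
        lintegral_lintegral_swap hF.aemeasurable.ennreal_ofReal
    _ ≤ ∫⁻ y, ∫⁻ x, ENNReal.ofReal (G y x) ∂μ ∂ν :=
        lintegral_mono fun y => lintegral_mono fun x => ENNReal.ofReal_le_ofReal (hFG x y)
    _ = ∫⁻ y, ENNReal.ofReal (∫ x, G y x ∂μ) ∂ν := lintegral_congr fun y =>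
        (ofReal_integral_eq_lintegral_ofReal (hG y) (ae_of_all _ (hG0 y))).symm
    _ = ENNReal.ofReal (∫ y, (∫ x, G y x ∂μ) ∂ν) :=
        (ofReal_integral_eq_lintegral_ofReal hG'
          (ae_of_all _ fun y => integral_nonneg (hG0 y))).symm

theorem integral_mul_le_sqrt_mul_sqrt {α : Type*} [MeasurableSpace α] {μ : Measure α}
    {f g : α → ℝ} (hf0 : 0 ≤ᵐ[μ] f) (hg0 : 0 ≤ᵐ[μ] g) (hf : MemLp f 2 μ) (hg : MemLp g 2 μ) :
    ∫ a, f a * g a ∂μ ≤ √(∫ a, f a ^ 2 ∂μ) * √(∫ a, g a ^ 2 ∂μ) := by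
  have h := integral_mul_le_Lp_mul_Lq_of_nonneg Real.HolderConjugate.two_two hf0 hg0
    (by simpa using hf) (by simpa using hg)
  simpa only [Real.sqrt_eq_rpow, Real.rpow_two] using h

theorem norm_integral_conj_mul_mul_le_of_decay {V : Type*} [NormedAddCommGroup V]
    [MeasurableSpace V] [OpensMeasurableSpace V] {μ : Measure V} {F G m : V → ℂ}
    (hF : MemLp F 2 μ) (hG : MemLp G 2 μ) {C γ₁ γ₂ : ℝ} (hC : 0 ≤ C) (hγ₁ : 0 ≤ γ₁)
    (hγ₂ : 0 ≤ γ₂) (hm : ∀ ξ, ‖m ξ‖ ≤ C * (1 + ‖ξ‖) ^ (-(γ₁ + γ₂))) :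
    ‖∫ ξ, conj (F ξ) * G ξ * m ξ ∂μ‖ ≤
      C * (√(∫ ξ, ‖F ξ‖ ^ 2 * (1 + ‖ξ‖) ^ ((-2) * γ₁) ∂μ) *
        √(∫ ξ, ‖G ξ‖ ^ 2 * (1 + ‖ξ‖) ^ ((-2) * γ₂) ∂μ)) := by
  have hw : ∀ ξ : V, 0 < 1 + ‖ξ‖ := fun ξ => by positivity
  have weighted_memLp : ∀ {H : V → ℂ} {γ : ℝ}, MemLp H 2 μ → 0 ≤ γ →
      MemLp (fun ξ => ‖H ξ‖ * (1 + ‖ξ‖) ^ (-γ)) 2 μ := fun {H γ} hH hγ => by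
    have hcont : Continuous fun ξ : V => (1 + ‖ξ‖) ^ (-γ) :=
      (by fun_prop : Continuous fun ξ : V => 1 + ‖ξ‖).rpow_const fun ξ => .inl (hw ξ).ne'
    refine hH.norm.of_le (hH.1.norm.mul hcont.aestronglyMeasurable) (ae_of_all _ fun ξ => ?_)
    have : (1 + ‖ξ‖) ^ (-γ) ≤ 1 :=
      Real.rpow_le_one_of_one_le_of_nonpos (by simp) (neg_nonpos.mpr hγ)
    simp only [norm_mul, norm_norm, Real.norm_of_nonneg (Real.rpow_nonneg (hw ξ).le _)]
    exact mul_le_of_le_one_right (norm_nonneg _) this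
  have weight_sq : ∀ (r γ : ℝ) (ξ : V),
      (r * (1 + ‖ξ‖) ^ (-γ)) ^ 2 = r ^ 2 * (1 + ‖ξ‖) ^ ((-2) * γ) := fun r γ ξ => by
    rw [mul_pow, ← Real.rpow_natCast ((1 + ‖ξ‖) ^ (-γ)), ← Real.rpow_mul (hw ξ).le]
    ring_nf
  set a := fun ξ => ‖F ξ‖ * (1 + ‖ξ‖) ^ (-γ₁)
  set b := fun ξ => ‖G ξ‖ * (1 + ‖ξ‖) ^ (-γ₂)
  calc ‖∫ ξ, conj (F ξ) * G ξ * m ξ ∂μ‖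
      ≤ ∫ ξ, ‖conj (F ξ) * G ξ * m ξ‖ ∂μ := norm_integral_le_integral_norm _
    _ ≤ ∫ ξ, C * (a ξ * b ξ) ∂μ := by
      refine integral_mono_of_nonneg (ae_of_all _ fun ξ => norm_nonneg _)
        (((weighted_memLp hF hγ₁).integrable_mul (weighted_memLp hG hγ₂)).const_mul C)
        (ae_of_all _ fun ξ => ?_)
      have hsplit : (1 + ‖ξ‖) ^ (-(γ₁ + γ₂)) = (1 + ‖ξ‖) ^ (-γ₁) * (1 + ‖ξ‖) ^ (-γ₂) := by
        rw [← Real.rpow_add (hw ξ), neg_add]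
      calc ‖conj (F ξ) * G ξ * m ξ‖ = ‖F ξ‖ * ‖G ξ‖ * ‖m ξ‖ := by simp
        _ ≤ ‖F ξ‖ * ‖G ξ‖ * (C * (1 + ‖ξ‖) ^ (-(γ₁ + γ₂))) := by gcongr; exact hm ξ
        _ = C * (a ξ * b ξ) := by rw [hsplit]; ring
    _ = C * ∫ ξ, a ξ * b ξ ∂μ := integral_const_mul C _
    _ ≤ C * (√(∫ ξ, a ξ ^ 2 ∂μ) * √(∫ ξ, b ξ ^ 2 ∂μ)) := by
      gcongr
      exact integral_mul_le_sqrt_mul_sqrt (ae_of_all _ fun ξ => by positivity)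
        (ae_of_all _ fun ξ => by positivity) (weighted_memLp hF hγ₁) (weighted_memLp hG hγ₂)
    _ = _ := by simp only [a, b, weight_sq]

theorem Finset.prod_le_prod_ciSup_mul_prod_filter_not {ι X : Type*} [Fintype ι] (p : ι → Prop)
    [DecidablePred p] {F : ι → X → ℝ} (hF0 : ∀ j x, 0 ≤ F j x)
    (hF : ∀ j, BddAbove (Set.range (F j))) (y : ι → X) :
    ∏ j, F j (y j) ≤
      (∏ j ∈ univ.filter p, ⨆ x, F j x) * ∏ j ∈ univ.filter (fun j => ¬ p j), F j (y j) := by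
  rw [← prod_filter_mul_prod_filter_not univ p]
  exact mul_le_mul_of_nonneg_right (prod_le_prod (fun j _ => hF0 _ _)
    fun j _ => le_ciSup (hF j) _) (prod_nonneg fun j _ => hF0 _ _)

theorem Fin.prod_filter_not_two_le {M : Type*} [CommMonoid M] {k : ℕ} (hk : 2 ≤ k)
    (F : Fin k → M) :
    ∏ j ∈ Finset.univ.filter (fun j : Fin k => ¬ 2 ≤ (j : ℕ)), F j =
      F ⟨0, zero_lt_two.trans_le hk⟩ * F ⟨1, one_lt_two.trans_le hk⟩ :=
  Finset.prod_eq_mul _ _ (by simp [Fin.ext_iff])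
    (fun j hj hne => by simp [Fin.ext_iff] at hj hne; omega) (by simp) (by simp)

theorem Fin.sum_inner_ite_zero_one {V : Type*} [NormedAddCommGroup V] [InnerProductSpace ℝ V]
    {k : ℕ} (hk : 2 ≤ k) (u : Fin k → V) (ξ : V) :
    ∑ j, ⟪u j, if (j : ℕ) = 0 then -ξ else if (j : ℕ) = 1 then ξ else 0⟫ =
      -⟪u ⟨0, zero_lt_two.trans_le hk⟩ - u ⟨1, one_lt_two.trans_le hk⟩, ξ⟫ := by
  rw [Fintype.sum_eq_add ⟨0, zero_lt_two.trans_le hk⟩ ⟨1, one_lt_two.trans_le hk⟩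
    (by simp [Fin.ext_iff]) fun j hj => by simp [Fin.ext_iff] at hj; simp [hj.1, hj.2]]
  simp [inner_sub_left]
  ring

theorem SchwartzMap.bddAbove_range {E : Type*} [NormedAddCommGroup E] [NormedSpace ℝ E]
    (f : 𝓢(E, ℝ)) : BddAbove (Set.range f) :=
  ⟨SchwartzMap.seminorm ℝ 0 0 f, by
    rintro _ ⟨x, rfl⟩
    exact (le_abs_self _).trans (norm_le_seminorm ℝ f x)⟩

section Schwartz

variable {V : Type*} [NormedAddCommGroup V] [InnerProductSpace ℝ V] [FiniteDimensional ℝ V]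
  [MeasurableSpace V] [BorelSpace V]

theorem SchwartzMap.memLp_fourier (χ : 𝓢(V, ℂ)) (p : ENNReal) : MemLp (𝓕 ⇑χ) p := by
  rw [← fourier_coe]
  exact (𝓕 χ).memLp p

theorem Real.fourier_comp_sub_right {E : Type*} [NormedAddCommGroup E] [NormedSpace ℂ E]
    (f : V → E) (a ξ : V) : 𝓕 (fun x => f (x - a)) ξ = 𝐞 (-⟪a, ξ⟫) • 𝓕 f ξ := by
  have h := congrFun (VectorFourier.fourierIntegral_comp_add_right 𝐞 volume (innerₗ V) f (-a)) ξ
  simp only [Function.comp_def, ← sub_eq_add_neg, map_neg, LinearMap.neg_apply] at h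
  exact h

theorem SchwartzMap.integral_conj_translate_mul_translate (φ ψ : 𝓢(V, ℂ)) (a b : V) :
    ∫ x, conj (φ (x - a)) * ψ (x - b) = ∫ ξ, conj (𝓕 ⇑φ ξ) * 𝓕 ⇑ψ ξ * 𝐞 ⟪a - b, ξ⟫ := by
  have h := integral_inner_fourier_fourier (φ.compSubConstCLM ℂ a) (ψ.compSubConstCLM ℂ b)
  simp only [fourier_coe, RCLike.inner_apply'] at h
  change ∫ ξ, conj (𝓕 (fun x => φ (x - a)) ξ) * 𝓕 (fun x => ψ (x - b)) ξ =
    ∫ x, conj (φ (x - a)) * ψ (x - b) at h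
  rw [← h]
  congr 1 with ξ
  rw [Real.fourier_comp_sub_right, Real.fourier_comp_sub_right, inner_sub_left, sub_eq_add_neg,
    AddChar.map_add_eq_mul]
  simp only [Circle.smul_def, smul_eq_mul, map_mul, Circle.starRingEnd_addChar, neg_neg,
    Circle.coe_mul]
  ring

theorem SchwartzMap.integral_integral_conj_translate_mul_translate {Ω : Type*}
    [MeasurableSpace Ω] (ν : Measure Ω) [IsFiniteMeasure ν] (φ ψ : 𝓢(V, ℂ)) {a b : Ω → V}
    (ha : Measurable a) (hb : Measurable b) :
    ∫ ω, (∫ x, conj (φ (x - a ω)) * ψ (x - b ω)) ∂ν =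
      ∫ ξ, conj (𝓕 ⇑φ ξ) * 𝓕 ⇑ψ ξ * ∫ ω, (𝐞 ⟪a ω - b ω, ξ⟫ : ℂ) ∂ν := by
  set Ψ : Ω × V → ℂ := fun p => conj (𝓕 ⇑φ p.2) * 𝓕 ⇑ψ p.2 * 𝐞 ⟪a p.1 - b p.1, p.2⟫
  have hΨ : Integrable Ψ (ν.prod volume) := by
    have hΦ : Continuous fun p : V × V => conj (𝓕 ⇑φ p.2) * 𝓕 ⇑ψ p.2 * 𝐞 ⟪p.1, p.2⟫ := by
      simp only [← fourier_coe]
      fun_prop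
    refine ((integrable_const (1 : ℝ)).mul_prod
      ((memLp_fourier φ 2).norm.integrable_mul (memLp_fourier ψ 2).norm)).mono'
      (hΦ.measurable.comp ((ha.sub hb).prodMap measurable_id)).aestronglyMeasurable
      (ae_of_all _ fun p => ?_)
    simp [Ψ, Circle.norm_coe]
  calc _ = ∫ ω, (∫ ξ, Ψ (ω, ξ)) ∂ν :=
        integral_congr_ae (ae_of_all _ fun ω => integral_conj_translate_mul_translate φ ψ _ _)
    _ = ∫ ξ, ∫ ω, Ψ (ω, ξ) ∂ν := integral_integral_swap hΨ
    _ = _ := by simp only [Ψ, integral_const_mul]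

theorem SchwartzMap.integrable_translate_mul_translate (g h : 𝓢(V, ℝ)) (a b : V) :
    Integrable fun x => g (x - a) * h (x - b) :=
  (h.integrable.comp_sub_right b).bdd_mul (g.continuous.comp (by fun_prop)).aestronglyMeasurable
    (ae_of_all _ fun x => norm_le_seminorm ℝ g (x - a))

theorem SchwartzMap.integrable_integral_translate_mul_translate {Ω : Type*} [MeasurableSpace Ω]
    (ν : Measure Ω) [IsFiniteMeasure ν] (g h : 𝓢(V, ℝ)) {a b : Ω → V} (ha : Measurable a)
    (hb : Measurable b) : Integrable (fun ω => ∫ x, g (x - a ω) * h (x - b ω)) ν := by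
  have hmeas : Measurable fun p : Ω × V => g (p.2 - a p.1) * h (p.2 - b p.1) :=
    (g.continuous.measurable.comp (measurable_snd.sub (ha.comp measurable_fst))).mul
      (h.continuous.measurable.comp (measurable_snd.sub (hb.comp measurable_fst)))
  refine Integrable.of_bound (hmeas.aestronglyMeasurable (μ := ν.prod volume)).integral_prod_right'
    (SchwartzMap.seminorm ℝ 0 0 g * ∫ x, ‖h x‖) (ae_of_all _ fun ω => ?_)
  calc ‖∫ x, g (x - a ω) * h (x - b ω)‖ ≤ ∫ x, SchwartzMap.seminorm ℝ 0 0 g * ‖h (x - b ω)‖ :=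
        norm_integral_le_of_norm_le ((h.integrable.comp_sub_right (b ω)).norm.const_mul _)
          (ae_of_all _ fun x => by rw [norm_mul]; gcongr; exact norm_le_seminorm ℝ g _)
    _ = _ := by rw [integral_const_mul, integral_sub_right_eq_self fun x => ‖h x‖]

theorem SchwartzMap.integral_integral_translate_mul_le {Ω : Type*} [MeasurableSpace Ω]
    (ν : Measure Ω) [IsFiniteMeasure ν] {a b : Ω → V} (ha : Measurable a) (hb : Measurable b)
    (g h : 𝓢(V, ℝ)) {C γ₁ γ₂ : ℝ} (hC : 0 ≤ C) (hγ₁ : 0 ≤ γ₁) (hγ₂ : 0 ≤ γ₂)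
    (hdecay : ∀ ξ, ‖∫ ω, (𝐞 ⟪a ω - b ω, ξ⟫ : ℂ) ∂ν‖ ≤ C * (1 + ‖ξ‖) ^ (-(γ₁ + γ₂))) :
    ∫ ω, (∫ x, g (x - a ω) * h (x - b ω)) ∂ν ≤
      C * (√(∫ ξ, ‖𝓕 (fun x => (g x : ℂ)) ξ‖ ^ 2 * (1 + ‖ξ‖) ^ ((-2) * γ₁)) *
        √(∫ ξ, ‖𝓕 (fun x => (h x : ℂ)) ξ‖ ^ 2 * (1 + ‖ξ‖) ^ ((-2) * γ₂))) := by
  set φ : 𝓢(V, ℂ) := g.postcompCLM (𝕜 := ℝ) ofRealCLM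
  set ψ : 𝓢(V, ℂ) := h.postcompCLM (𝕜 := ℝ) ofRealCLM
  have hcomplex : ((∫ ω, (∫ x, g (x - a ω) * h (x - b ω)) ∂ν : ℝ) : ℂ) =
      ∫ ω, (∫ x, conj (φ (x - a ω)) * ψ (x - b ω)) ∂ν := by
    rw [← integral_complex_ofReal]
    congr 1 with ω
    rw [← integral_complex_ofReal]
    simp [φ, ψ]
  calc ∫ ω, (∫ x, g (x - a ω) * h (x - b ω)) ∂ν
      ≤ ‖((∫ ω, (∫ x, g (x - a ω) * h (x - b ω)) ∂ν : ℝ) : ℂ)‖ := by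
        rw [norm_real, Real.norm_eq_abs]
        exact le_abs_self _
    _ = ‖∫ ξ, conj (𝓕 ⇑φ ξ) * 𝓕 ⇑ψ ξ * ∫ ω, (𝐞 ⟪a ω - b ω, ξ⟫ : ℂ) ∂ν‖ := by
        rw [hcomplex, integral_integral_conj_translate_mul_translate ν φ ψ ha hb]
    _ ≤ _ := norm_integral_conj_mul_mul_le_of_decay
      (memLp_fourier φ 2) (memLp_fourier ψ 2) hC hγ₁ hγ₂ hdecay

end Schwartz

/-- Bound for translation invariant multilinear generalized Radon transforms:
if the Fourier transform of the finite nonnegative measure `μ` on `(ℝ^d)^k` decays as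
`|μ̂(-ξ,ξ,0,…,0)| ≤ C(1+|ξ|)^{-γ}`, then for `γ₁ + γ₂ = γ` and nonnegative Schwartz
functions `f₁,…,f_k`, the multilinear convolution `T_μ` obeys
`‖T_μ(f₁,…,f_k)‖_{L¹} ≲ (∏_{j≥3}‖f_j‖_∞) ‖f₁‖_{L²_{-γ₁}} ‖f₂‖_{L²_{-γ₂}}`. -/
theorem stmt0 {d k : ℕ} (hk : 2 ≤ k)
    (μ : Measure (Fin k → EuclideanSpace ℝ (Fin d))) [IsFiniteMeasure μ]
    (γ C : ℝ) (hC : 0 < C)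
    (hdecay : ∀ ξ : EuclideanSpace ℝ (Fin d),
      ‖∫ u, negExp (∑ j, (inner ℝ (u j)
          (if (j : ℕ) = 0 then -ξ else if (j : ℕ) = 1 then ξ else 0) : ℝ)) ∂μ‖
        ≤ C * (1 + ‖ξ‖) ^ (-γ))
    (γ₁ γ₂ : ℝ) (hγ₁ : 0 < γ₁) (hγ₂ : 0 < γ₂) (hsum : γ₁ + γ₂ = γ) :
    ∃ C' : ℝ, 0 < C' ∧
      ∀ f : Fin k → SchwartzMap (EuclideanSpace ℝ (Fin d)) ℝ,
        (∀ j x, 0 ≤ f j x) →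
        ∫ x, |∫ u, ∏ j, f j (x - u j) ∂μ| ≤
          C' * (∏ j ∈ Finset.univ.filter (fun j : Fin k => 2 ≤ (j : ℕ)), ⨆ x, f j x) *
            Real.sqrt (∫ ξ : EuclideanSpace ℝ (Fin d),
              ‖ftR (fun x => f ⟨0, by omega⟩ x) ξ‖ ^ 2 * (1 + ‖ξ‖) ^ ((-2) * γ₁)) *
            Real.sqrt (∫ ξ : EuclideanSpace ℝ (Fin d),
              ‖ftR (fun x => f ⟨1, by omega⟩ x) ξ‖ ^ 2 * (1 + ‖ξ‖) ^ ((-2) * γ₂)) := by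
  subst hsum
  refine ⟨C, hC, fun f hf => ?_⟩
  set i₀ : Fin k := ⟨0, by omega⟩
  set i₁ : Fin k := ⟨1, by omega⟩
  set B := ∏ j ∈ Finset.univ.filter (fun j : Fin k => 2 ≤ (j : ℕ)), ⨆ x, f j x
  have hB : 0 ≤ B := Finset.prod_nonneg fun j _ => (hf j 0).trans (le_ciSup (f j).bddAbove_range 0)
  have hprod : ∀ (x : EuclideanSpace ℝ (Fin d)) (u : Fin k → EuclideanSpace ℝ (Fin d)),
      ∏ j, f j (x - u j) ≤ B * (f i₀ (x - u i₀) * f i₁ (x - u i₁)) := fun x u => by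
    simpa only [Fin.prod_filter_not_two_le hk] using Finset.prod_le_prod_ciSup_mul_prod_filter_not
      (fun j : Fin k => 2 ≤ (j : ℕ)) (fun j y => hf j y) (fun j => (f j).bddAbove_range)
      (fun j => x - u j)
  have hdecay' : ∀ ξ, ‖∫ u, (𝐞 ⟪u i₀ - u i₁, ξ⟫ : ℂ) ∂μ‖ ≤ C * (1 + ‖ξ‖) ^ (-(γ₁ + γ₂)) := by
    simpa only [Fin.sum_inner_ite_zero_one hk, negExp_eq_fourierChar, neg_neg] using hdecay
  have hT : ∀ x : EuclideanSpace ℝ (Fin d),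
      |∫ u, ∏ j, f j (x - u j) ∂μ| = ∫ u, ∏ j, f j (x - u j) ∂μ := fun x =>
    abs_of_nonneg (integral_nonneg fun u => Finset.prod_nonneg fun j _ => hf j _)
  simp only [hT, ftR_eq_fourier]
  calc ∫ x, (∫ u, ∏ j, f j (x - u j) ∂μ)
      ≤ ∫ u, (∫ x, B * (f i₀ (x - u i₀) * f i₁ (x - u i₁))) ∂μ :=
        integral_integral_le_integral_integral_of_le
          (fun x u => Finset.prod_nonneg fun j _ => hf j _)
          (by fun_prop : Continuous fun p : _ × (Fin k → _) =>
            ∏ j, f j (p.1 - p.2 j)).aestronglyMeasurable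
          hprod (fun u => ((f i₀).integrable_translate_mul_translate (f i₁) _ _).const_mul B)
          (by simpa only [integral_const_mul] using
            ((f i₀).integrable_integral_translate_mul_translate μ (f i₁) (measurable_pi_apply i₀)
              (measurable_pi_apply i₁)).const_mul B)
    _ = B * ∫ u, (∫ x, f i₀ (x - u i₀) * f i₁ (x - u i₁)) ∂μ := by
        simp only [integral_const_mul]
    _ ≤ B * (C * _) := by
        gcongr
        exact (f i₀).integral_integral_translate_mul_le μ (measurable_pi_apply i₀)
          (measurable_pi_apply i₁) (f i₁) hC.le hγ₁.le hγ₂.le hdecay'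
    _ = _ := by ring
end

section
/- Let P ⊂ [0,1]^d be a set of n points, 0 < s < d, and μ_P^s the measure dμ_P^s(x) = n^{-1} n^{d/s} Σ_{p∈P} χ_{B(p, n^{-1/s})}(x) dx. Then the finiteness of the energy I_s(μ_P^s) = ∬ |x-y|^{-s} dμ_P^s(x) dμ_P^s(y) (uniformly in n) is equivalent, up to constants, to the discrete condition n^{-2} Σ_{p ≠ p' ∈ P} |p - p'|^{-s} ≲ 1, provided the points of P are n^{-1/s}-separated. -/
/-!
Write `r = n^{-1/s}` and `a = n^{d/s - 1}`, so that `μ_P^s = a ∑_p μ|_{B(p,r)}` and the energy is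
`a² ∑_{p,q} I(p,q)` with `I(p,q) = ∬_{B(p,r) × B(q,r)} |x - y|^{-s}`. Scaling gives
`∫_{B(x,R)} |x - y|^{-s} dy = R^{d-s} ∫_{B(0,1)} |w|^{-s} dw`, which is finite because `s < d`.
Hence `I(p,q) ≲ r^{2d} max(|p - q|, r)^{-s}` (by the local bound when `|p - q| ≤ 4r`, and because
`|x - y| ≥ |p - q| / 2` otherwise), while `I(p,q) ≳ r^{2d} |p - q|^{-s}` as soon as `|p - q| ≥ r`.
Summing over the `n^{-1/s}`-separated set and using `a² r^{2d} = n^{-2}`, `r^{-s} = n`, the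
energy lies between constant multiples of `n^{-2} ∑_{p ≠ q} |p - q|^{-s}` and of one plus it.
-/

open MeasureTheory Classical
open scoped BigOperators ENNReal

open Metric Module

section BallPairEnergy

variable {α : Type*} [MetricSpace α] [MeasurableSpace α] [OpensMeasurableSpace α]
  (μ : Measure α)

noncomputable def ballPairEnergy (s r : ℝ) (p q : α) : ℝ≥0∞ :=
  ∫⁻ x in closedBall p r, ∫⁻ y in closedBall q r, ENNReal.ofReal (dist x y ^ (-s)) ∂μ ∂μ

lemma ballPairEnergy_le_of_le_dist {s r : ℝ} (hs : 0 ≤ s) (hr : 0 < r) {p q : α}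
    (h : 4 * r ≤ dist p q) :
    ballPairEnergy μ s r p q ≤
      ENNReal.ofReal ((dist p q / 2) ^ (-s)) * μ (closedBall q r) * μ (closedBall p r) := by
  rw [← setLIntegral_const, ← setLIntegral_const]
  refine setLIntegral_mono' measurableSet_closedBall fun x hx =>
    setLIntegral_mono' measurableSet_closedBall fun y hy => ENNReal.ofReal_le_ofReal ?_
  rw [mem_closedBall] at hx hy
  refine Real.rpow_le_rpow_of_nonpos (by linarith) ?_ (neg_nonpos.2 hs)
  linarith [dist_triangle4 p x y q, dist_comm p x]

/-- In `ℝ`, `0 ^ (-s) = 0`, so the diagonal `x = y` has to be discarded as a null set. -/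
lemma le_ballPairEnergy [NullSingletonClass μ] {s : ℝ} (hs : 0 ≤ s) (r : ℝ) (p q : α) :
    ENNReal.ofReal ((2 * r + dist p q) ^ (-s)) * μ (closedBall q r) * μ (closedBall p r) ≤
      ballPairEnergy μ s r p q := by
  rw [← setLIntegral_const, ← setLIntegral_const]
  refine setLIntegral_mono' measurableSet_closedBall fun x hx =>
    setLIntegral_mono_ae' measurableSet_closedBall ?_
  filter_upwards [μ.ae_ne x] with y hyx hy
  rw [mem_closedBall] at hx hy
  refine ENNReal.ofReal_le_ofReal (Real.rpow_le_rpow_of_nonpos (dist_pos.2 hyx.symm) ?_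
    (neg_nonpos.2 hs))
  linarith [dist_triangle4 x p q y, dist_comm y q]

end BallPairEnergy

section ThickenedMeasure

variable {α : Type*} [MeasurableSpace α] (μ : Measure α)

lemma withDensity_finsetSum {ι : Type*} (P : Finset ι) {f : ι → α → ℝ≥0∞}
    (hf : ∀ i ∈ P, Measurable (f i)) :
    μ.withDensity (∑ i ∈ P, f i) = ∑ i ∈ P, μ.withDensity (f i) := by
  ext1 t ht
  simp only [withDensity_apply _ ht, Measure.coe_finsetSum, Finset.sum_apply]
  exact lintegral_finsetSum' P fun i hi => (hf i hi).aemeasurable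

lemma lintegral_lintegral_finsetSum_smul_restrict [SFinite μ] {ι : Type*}
    {K : α → α → ℝ≥0∞} (hK : Measurable (Function.uncurry K)) (c : ℝ≥0∞) (P : Finset ι)
    (A : ι → Set α) :
    ∫⁻ x, ∫⁻ y, K x y ∂(∑ j ∈ P, c • μ.restrict (A j)) ∂(∑ i ∈ P, c • μ.restrict (A i)) =
      c ^ 2 * ∑ i ∈ P, ∑ j ∈ P, ∫⁻ x in A i, ∫⁻ y in A j, K x y ∂μ ∂μ := by
  have hJ : ∀ j, Measurable fun x => ∫⁻ y in A j, K x y ∂μ := fun j => hK.lintegral_prod_right'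
  simp only [lintegral_finsetSum_measure, lintegral_smul_measure, smul_eq_mul]
  rw [Finset.mul_sum]
  refine Finset.sum_congr rfl fun i _ => ?_
  rw [lintegral_finsetSum _ fun j _ => (hJ j).const_mul c, Finset.mul_sum, Finset.mul_sum]
  refine Finset.sum_congr rfl fun j _ => ?_
  rw [lintegral_const_mul _ (hJ j)]
  ring

variable [MetricSpace α]

/-- The measure `a ∑_{p ∈ P} χ_{B(p, r)} dμ`; the paper's `μ_P^s` is the case `a = n^{d/s - 1}`,
`r = n^{-1/s}`. -/
noncomputable def thickenedMeasure (a r : ℝ) (P : Finset α) : Measure α :=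
  μ.withDensity fun z => ENNReal.ofReal (a * ∑ p ∈ P, if dist z p ≤ r then (1 : ℝ) else 0)

variable [OpensMeasurableSpace α]

lemma thickenedMeasure_eq_sum {a : ℝ} (ha : 0 ≤ a) (r : ℝ) (P : Finset α) :
    thickenedMeasure μ a r P = ∑ p ∈ P, ENNReal.ofReal a • μ.restrict (closedBall p r) := by
  have hf : (fun z => ENNReal.ofReal (a * ∑ p ∈ P, if dist z p ≤ r then (1 : ℝ) else 0)) =
      ∑ p ∈ P, ENNReal.ofReal a • (closedBall p r).indicator 1 := by
    ext z
    rw [ENNReal.ofReal_mul ha, ENNReal.ofReal_sum_of_nonneg (fun p _ => by positivity),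
      Finset.mul_sum, Finset.sum_apply]
    refine Finset.sum_congr rfl fun p _ => ?_
    by_cases h : dist z p ≤ r <;> simp [h, Set.indicator, mem_closedBall]
  rw [thickenedMeasure, hf, withDensity_finsetSum _ _ fun p _ =>
    (measurable_one.indicator measurableSet_closedBall).const_smul _]
  refine Finset.sum_congr rfl fun p _ => ?_
  rw [withDensity_smul _ (measurable_one.indicator measurableSet_closedBall),
    withDensity_indicator_one measurableSet_closedBall]

lemma lintegral_lintegral_thickenedMeasure [SecondCountableTopology α] [SFinite μ] {a : ℝ}
    (ha : 0 ≤ a) (r s : ℝ) (P : Finset α) :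
    ∫⁻ x, ∫⁻ y, ENNReal.ofReal (dist x y ^ (-s)) ∂thickenedMeasure μ a r P
        ∂thickenedMeasure μ a r P =
      ENNReal.ofReal a ^ 2 * ∑ p ∈ P, ∑ q ∈ P, ballPairEnergy μ s r p q := by
  rw [thickenedMeasure_eq_sum μ ha]
  exact lintegral_lintegral_finsetSum_smul_restrict μ (by fun_prop) _ P _

end ThickenedMeasure

section RieszKernel

variable {E : Type*} [NormedAddCommGroup E] [NormedSpace ℝ E] [FiniteDimensional ℝ E]
  [MeasurableSpace E] [BorelSpace E] (μ : Measure E) [μ.IsAddHaarMeasure]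

lemma lintegral_eq_ofReal_pow_mul_lintegral_comp_smul (f : E → ℝ≥0∞) {R : ℝ} (hR : 0 < R) :
    ∫⁻ z, f z ∂μ = ENNReal.ofReal (R ^ finrank ℝ E) * ∫⁻ w, f (R • w) ∂μ := by
  let e : E ≃ᵐ E := (Homeomorph.smulOfNeZero R hR.ne').toMeasurableEquiv
  have hRd : 0 < R ^ finrank ℝ E := by positivity
  have : ∫⁻ w, f (R • w) ∂μ = ENNReal.ofReal (R ^ finrank ℝ E)⁻¹ * ∫⁻ z, f z ∂μ := by
    change ∫⁻ w, f (e w) ∂μ = _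
    rw [← lintegral_map_equiv f e]
    change ∫⁻ z, f z ∂(Measure.map (R • ·) μ) = _
    rw [Measure.map_addHaar_smul μ hR.ne', lintegral_smul_measure, abs_of_pos (inv_pos.2 hRd),
      smul_eq_mul]
  rw [this, ← mul_assoc, ← ENNReal.ofReal_mul hRd.le, mul_inv_cancel₀ hRd.ne',
    ENNReal.ofReal_one, one_mul]

lemma setLIntegral_closedBall_rpow_neg_dist (x : E) {R : ℝ} (hR : 0 < R) (s : ℝ) :
    ∫⁻ y in closedBall x R, ENNReal.ofReal (dist x y ^ (-s)) ∂μ =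
      ENNReal.ofReal (R ^ finrank ℝ E * R ^ (-s)) *
        ∫⁻ w in closedBall 0 1, ENNReal.ofReal (‖w‖ ^ (-s)) ∂μ := by
  rw [← lintegral_indicator measurableSet_closedBall,
    ← lintegral_add_left_eq_self _ x, lintegral_eq_ofReal_pow_mul_lintegral_comp_smul μ _ hR,
    ← lintegral_indicator measurableSet_closedBall, ENNReal.ofReal_mul (by positivity), mul_assoc]
  congr 1
  rw [← lintegral_const_mul' _ _ ENNReal.ofReal_ne_top]
  refine lintegral_congr fun w => ?_
  have hdist : dist (x + R • w) x = R * ‖w‖ := by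
    rw [dist_self_add_left, norm_smul, Real.norm_of_nonneg hR.le]
  simp only [Set.indicator, mem_closedBall, hdist, dist_comm x, dist_zero_right,
    mul_le_iff_le_one_right hR, mul_ite, mul_zero, Real.mul_rpow hR.le (norm_nonneg w),
    ENNReal.ofReal_mul (Real.rpow_nonneg hR.le _)]

lemma setLIntegral_closedBall_rpow_neg_norm_lt_top (hd : 1 ≤ finrank ℝ E) {s : ℝ}
    (hs : s < finrank ℝ E) :
    ∫⁻ w in closedBall (0 : E) 1, ENNReal.ofReal (‖w‖ ^ (-s)) ∂μ < ∞ := by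
  have hloc : LocallyIntegrable (fun w : E => ‖w‖ ^ (-s)) μ :=
    locallyIntegrable_of_norm_le_rpow (C := 1) hd hs
      (.of_forall fun w => by simp [abs_of_nonneg (Real.rpow_nonneg (norm_nonneg w) _)])
      (measurable_norm.pow_const (-s)).aestronglyMeasurable
  exact (hloc.integrableOn_isCompact (isCompact_closedBall 0 1)).lintegral_lt_top

lemma ballPairEnergy_le_of_dist_le {s r : ℝ} (hr : 0 < r) {p q : E} (h : dist p q ≤ 4 * r) :
    ballPairEnergy μ s r p q ≤
      ENNReal.ofReal ((6 * r) ^ finrank ℝ E * (6 * r) ^ (-s)) *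
        (∫⁻ w in closedBall 0 1, ENNReal.ofReal (‖w‖ ^ (-s)) ∂μ) * μ (closedBall p r) := by
  rw [← setLIntegral_const]
  refine setLIntegral_mono' measurableSet_closedBall fun x hx => ?_
  rw [← setLIntegral_closedBall_rpow_neg_dist μ x (by positivity)]
  refine lintegral_mono_set fun y hy => ?_
  rw [mem_closedBall] at hx hy ⊢
  linarith [dist_triangle4 y q p x, dist_comm p q, dist_comm p x]

lemma exists_ballPairEnergy_le (hd : 1 ≤ finrank ℝ E) {s : ℝ} (hs0 : 0 ≤ s)
    (hsd : s < finrank ℝ E) :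
    ∃ A : ℝ≥0∞, A ≠ ∞ ∧ ∀ r, 0 < r → ∀ p q : E, ballPairEnergy μ s r p q ≤
      A * ENNReal.ofReal ((r ^ finrank ℝ E) ^ 2 * max (dist p q) r ^ (-s)) := by
  set d := finrank ℝ E
  set K := ∫⁻ w in closedBall (0 : E) 1, ENNReal.ofReal (‖w‖ ^ (-s)) ∂μ
  set c₀ := μ (ball 0 1)
  have hK : K ≠ ∞ := (setLIntegral_closedBall_rpow_neg_norm_lt_top μ hd hsd).ne
  have hc₀ : c₀ ≠ ∞ := measure_ball_lt_top.ne
  refine ⟨ENNReal.ofReal (6 ^ d) * K * c₀ + ENNReal.ofReal (2 ^ s) * c₀ ^ 2, by finiteness,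
    fun r hr p q => ?_⟩
  have hvol : ∀ x : E, μ (closedBall x r) = ENNReal.ofReal (r ^ d) * c₀ :=
    fun x => Measure.addHaar_closedBall μ x hr.le
  rcases le_total (dist p q) (4 * r) with hnear | hfar
  · have hmax : (6 * r) ^ (-s) ≤ max (dist p q) r ^ (-s) :=
      Real.rpow_le_rpow_of_nonpos (lt_max_of_lt_right hr)
        (max_le (by linarith) (by linarith)) (neg_nonpos.2 hs0)
    calc ballPairEnergy μ s r p q
        ≤ ENNReal.ofReal ((6 * r) ^ d * (6 * r) ^ (-s)) * K * μ (closedBall p r) :=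
          ballPairEnergy_le_of_dist_le μ hr hnear
      _ = ENNReal.ofReal (6 ^ d * ((r ^ d) ^ 2 * (6 * r) ^ (-s))) * K * c₀ := by
          rw [hvol, show 6 ^ d * ((r ^ d) ^ 2 * (6 * r) ^ (-s)) =
            (6 * r) ^ d * (6 * r) ^ (-s) * r ^ d by ring,
            ENNReal.ofReal_mul (p := (6 * r) ^ d * (6 * r) ^ (-s)) (by positivity)]
          ring
      _ ≤ ENNReal.ofReal (6 ^ d * ((r ^ d) ^ 2 * max (dist p q) r ^ (-s))) * K * c₀ := by
          gcongr
      _ ≤ _ := by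
          rw [ENNReal.ofReal_mul (by positivity), add_mul]
          exact le_add_right (le_of_eq (by ring))
  · have hD : 0 < dist p q := by linarith
    have hhalf : (dist p q / 2) ^ (-s) = 2 ^ s * dist p q ^ (-s) := by
      rw [Real.div_rpow hD.le zero_le_two, Real.rpow_neg zero_le_two, div_inv_eq_mul, mul_comm]
    calc ballPairEnergy μ s r p q
        ≤ ENNReal.ofReal ((dist p q / 2) ^ (-s)) * μ (closedBall q r) * μ (closedBall p r) :=
          ballPairEnergy_le_of_le_dist μ hs0 hr hfar
      _ = ENNReal.ofReal (2 ^ s) * c₀ ^ 2 *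
            ENNReal.ofReal ((r ^ d) ^ 2 * max (dist p q) r ^ (-s)) := by
          rw [hvol, hvol, hhalf, max_eq_left (by linarith), sq (r ^ d),
            ENNReal.ofReal_mul (p := 2 ^ s) (by positivity),
            ENNReal.ofReal_mul (p := r ^ d * r ^ d) (by positivity),
            ENNReal.ofReal_mul (p := r ^ d) (by positivity)]
          ring
      _ ≤ _ := by
          rw [add_mul]
          exact le_add_left le_rfl

lemma exists_le_ballPairEnergy [NullSingletonClass μ] {s : ℝ} (hs0 : 0 ≤ s) :
    ∃ B : ℝ≥0∞, B ≠ 0 ∧ B ≠ ∞ ∧ ∀ r, 0 < r → ∀ p q : E, r ≤ dist p q →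
      B * ENNReal.ofReal ((r ^ finrank ℝ E) ^ 2 * dist p q ^ (-s)) ≤ ballPairEnergy μ s r p q := by
  set d := finrank ℝ E
  set c₀ := μ (ball 0 1)
  have hc₀ : c₀ ≠ 0 := (measure_ball_pos μ 0 one_pos).ne'
  refine ⟨ENNReal.ofReal (3 ^ (-s)) * c₀ ^ 2, by positivity, by finiteness,
    fun r hr p q hrD => ?_⟩
  have hvol : ∀ x : E, μ (closedBall x r) = ENNReal.ofReal (r ^ d) * c₀ :=
    fun x => Measure.addHaar_closedBall μ x hr.le
  have hD : 0 < dist p q := hr.trans_le hrD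
  have h3 : 3 ^ (-s) * dist p q ^ (-s) ≤ (2 * r + dist p q) ^ (-s) := by
    rw [← Real.mul_rpow zero_le_three hD.le]
    exact Real.rpow_le_rpow_of_nonpos (by positivity) (by linarith) (neg_nonpos.2 hs0)
  calc ENNReal.ofReal (3 ^ (-s)) * c₀ ^ 2 * ENNReal.ofReal ((r ^ d) ^ 2 * dist p q ^ (-s))
      = ENNReal.ofReal (3 ^ (-s) * dist p q ^ (-s)) * μ (closedBall q r) * μ (closedBall p r) := by
        rw [hvol, hvol, sq (r ^ d),
          ENNReal.ofReal_mul (p := 3 ^ (-s)) (by positivity),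
          ENNReal.ofReal_mul (p := r ^ d * r ^ d) (by positivity),
          ENNReal.ofReal_mul (p := r ^ d) (by positivity)]
        ring
    _ ≤ ENNReal.ofReal ((2 * r + dist p q) ^ (-s)) * μ (closedBall q r) * μ (closedBall p r) := by
        gcongr
    _ ≤ ballPairEnergy μ s r p q := le_ballPairEnergy μ hs0 r p q

end RieszKernel

section DiscreteEnergy

variable {α : Type*} [PseudoMetricSpace α] [DecidableEq α] (P : Finset α) {r s : ℝ}

lemma sum_sum_max_dist_rpow_neg (hr : 0 ≤ r) (hsep : ∀ p ∈ P, ∀ q ∈ P, p ≠ q → r ≤ dist p q) :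
    ∑ p ∈ P, ∑ q ∈ P, max (dist p q) r ^ (-s) =
      P.card * r ^ (-s) + ∑ p ∈ P, ∑ q ∈ P.erase p, dist p q ^ (-s) := by
  have hrow : ∀ p ∈ P, ∑ q ∈ P, max (dist p q) r ^ (-s) =
      r ^ (-s) + ∑ q ∈ P.erase p, dist p q ^ (-s) := by
    intro p hp
    rw [← Finset.add_sum_erase P _ hp, dist_self, max_eq_right hr]
    congr 1
    refine Finset.sum_congr rfl fun q hq => ?_
    obtain ⟨hqp, hq⟩ := Finset.mem_erase.1 hq
    rw [max_eq_left (hsep p hp q hq hqp.symm)]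
  rw [Finset.sum_congr rfl hrow, Finset.sum_add_distrib, Finset.sum_const, nsmul_eq_mul]

lemma sum_sum_le_of_le_max_dist {I : α → α → ℝ≥0∞} {A : ℝ≥0∞} {t : ℝ} (ht : 0 ≤ t) (hr : 0 ≤ r)
    (hsep : ∀ p ∈ P, ∀ q ∈ P, p ≠ q → r ≤ dist p q)
    (hI : ∀ p q, I p q ≤ A * ENNReal.ofReal (t * max (dist p q) r ^ (-s))) :
    ∑ p ∈ P, ∑ q ∈ P, I p q ≤
      A * ENNReal.ofReal (t * (P.card * r ^ (-s) + ∑ p ∈ P, ∑ q ∈ P.erase p, dist p q ^ (-s))) := by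
  rw [← sum_sum_max_dist_rpow_neg P hr hsep, Finset.mul_sum,
    ENNReal.ofReal_sum_of_nonneg fun p _ => by positivity, Finset.mul_sum]
  refine Finset.sum_le_sum fun p _ => ?_
  rw [Finset.mul_sum, ENNReal.ofReal_sum_of_nonneg fun q _ => by positivity, Finset.mul_sum]
  exact Finset.sum_le_sum fun q _ => hI p q

lemma le_sum_sum_of_le {I : α → α → ℝ≥0∞} {B : ℝ≥0∞} {t : ℝ} (ht : 0 ≤ t)
    (hsep : ∀ p ∈ P, ∀ q ∈ P, p ≠ q → r ≤ dist p q)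
    (hI : ∀ p q, r ≤ dist p q → B * ENNReal.ofReal (t * dist p q ^ (-s)) ≤ I p q) :
    B * ENNReal.ofReal (t * ∑ p ∈ P, ∑ q ∈ P.erase p, dist p q ^ (-s)) ≤
      ∑ p ∈ P, ∑ q ∈ P, I p q := by
  rw [Finset.mul_sum, ENNReal.ofReal_sum_of_nonneg fun p _ => by positivity, Finset.mul_sum]
  refine Finset.sum_le_sum fun p hp => ?_
  rw [Finset.mul_sum, ENNReal.ofReal_sum_of_nonneg fun q _ => by positivity, Finset.mul_sum]
  refine (Finset.sum_le_sum fun q hq => ?_).trans (Finset.sum_le_sum_of_subset (P.erase_subset p))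
  obtain ⟨hqp, hq⟩ := Finset.mem_erase.1 hq
  exact hI p q (hsep p hp q hq hqp.symm)

lemma rpow_neg_one_div_rpow_neg {n s : ℝ} (hn : 0 ≤ n) (hs : s ≠ 0) :
    (n ^ (-1 / s)) ^ (-s) = n := by
  rw [← Real.rpow_mul hn]
  field_simp
  simp

lemma ofReal_sq_mul_ofReal_eq {n : ℕ} (hn : 0 < n) (s : ℝ) (d : ℕ) (X : ℝ) :
    ENNReal.ofReal ((n : ℝ)⁻¹ * (n : ℝ) ^ ((d : ℝ) / s)) ^ 2 *
        ENNReal.ofReal ((((n : ℝ) ^ (-1 / s)) ^ d) ^ 2 * X) =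
      ENNReal.ofReal ((n : ℝ)⁻¹ ^ 2 * X) := by
  have hn : (0 : ℝ) < n := by exact_mod_cast hn
  have hscale : (n : ℝ)⁻¹ * (n : ℝ) ^ ((d : ℝ) / s) * ((n : ℝ) ^ (-1 / s)) ^ d = (n : ℝ)⁻¹ := by
    rw [← Real.rpow_natCast, ← Real.rpow_mul hn.le, mul_assoc, ← Real.rpow_add hn]
    field_simp
    simp
  rw [← ENNReal.ofReal_pow (by positivity), ← ENNReal.ofReal_mul (by positivity), ← mul_assoc,
    ← mul_pow, hscale]

variable {I : α → α → ℝ≥0∞} {n : ℕ} (hn : 0 < n) (d : ℕ)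
  (hsep : ∀ p ∈ P, ∀ q ∈ P, p ≠ q → (n : ℝ) ^ (-1 / s) ≤ dist p q)
include hn hsep

lemma ofReal_sq_mul_sum_sum_le {A : ℝ≥0∞} (hs : s ≠ 0) (hcard : P.card = n)
    (hI : ∀ p q, I p q ≤ A * ENNReal.ofReal
      ((((n : ℝ) ^ (-1 / s)) ^ d) ^ 2 * max (dist p q) ((n : ℝ) ^ (-1 / s)) ^ (-s))) :
    ENNReal.ofReal ((n : ℝ)⁻¹ * (n : ℝ) ^ ((d : ℝ) / s)) ^ 2 * ∑ p ∈ P, ∑ q ∈ P, I p q ≤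
      A * ENNReal.ofReal ((n : ℝ)⁻¹ ^ 2 * ∑ p ∈ P, ∑ q ∈ P.erase p, dist p q ^ (-s) + 1) := by
  have hn' : (0 : ℝ) < n := by exact_mod_cast hn
  have hsum := sum_sum_le_of_le_max_dist P (by positivity) (by positivity) hsep hI
  rw [hcard, rpow_neg_one_div_rpow_neg hn'.le hs] at hsum
  calc _ ≤ ENNReal.ofReal ((n : ℝ)⁻¹ * (n : ℝ) ^ ((d : ℝ) / s)) ^ 2 * (A * ENNReal.ofReal
          ((((n : ℝ) ^ (-1 / s)) ^ d) ^ 2 * (n * n + ∑ p ∈ P, ∑ q ∈ P.erase p, dist p q ^ (-s)))) :=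
        mul_le_mul_right hsum _
    _ = A * ENNReal.ofReal ((n : ℝ)⁻¹ ^ 2 * ∑ p ∈ P, ∑ q ∈ P.erase p, dist p q ^ (-s) + 1) := by
        rw [mul_left_comm, ofReal_sq_mul_ofReal_eq hn]
        congr 2
        field_simp
        ring

lemma le_ofReal_sq_mul_sum_sum {B : ℝ≥0∞}
    (hI : ∀ p q, (n : ℝ) ^ (-1 / s) ≤ dist p q →
      B * ENNReal.ofReal ((((n : ℝ) ^ (-1 / s)) ^ d) ^ 2 * dist p q ^ (-s)) ≤ I p q) :
    B * ENNReal.ofReal ((n : ℝ)⁻¹ ^ 2 * ∑ p ∈ P, ∑ q ∈ P.erase p, dist p q ^ (-s)) ≤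
      ENNReal.ofReal ((n : ℝ)⁻¹ * (n : ℝ) ^ ((d : ℝ) / s)) ^ 2 * ∑ p ∈ P, ∑ q ∈ P, I p q := by
  rw [← ofReal_sq_mul_ofReal_eq hn s d, mul_left_comm]
  gcongr
  exact le_sum_sum_of_le P (by positivity) hsep hI

end DiscreteEnergy

/-- For an `n^{-1/s}`-separated set `P` of `n` points in `[0,1]^d`, the `s`-energy of the
thickened measure `μ_P^s` is finite (uniformly in `n`) if and only if, up to constants, the
discrete condition `n^{-2} ∑_{p≠p'} |p-p'|^{-s} ≲ 1` holds. -/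
theorem stmt11 {d : ℕ} (hd : 1 ≤ d) (s : ℝ) (hs0 : 0 < s) (hsd : s < d) :
    ∃ C : ℝ, 0 < C ∧
      ∀ n : ℕ, 1 ≤ n → ∀ P : Finset (EuclideanSpace ℝ (Fin d)),
        P.card = n →
        (∀ p ∈ P, ∀ i, p i ∈ Set.Icc (0 : ℝ) 1) →
        (∀ p ∈ P, ∀ q ∈ P, p ≠ q → (n : ℝ) ^ (-1 / s) ≤ dist p q) →
        (let μP : Measure (EuclideanSpace ℝ (Fin d)) :=
          volume.withDensity fun z => ENNReal.ofReal ((n : ℝ)⁻¹ * (n : ℝ) ^ ((d : ℝ) / s) *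
            ∑ p ∈ P, if dist z p ≤ (n : ℝ) ^ (-1 / s) then (1 : ℝ) else 0)
        let En : ℝ≥0∞ := ∫⁻ x, ∫⁻ y, ENNReal.ofReal (dist x y ^ (-s)) ∂μP ∂μP
        let D : ℝ := (n : ℝ)⁻¹ ^ 2 *
          ∑ p ∈ P, ∑ q ∈ P.erase p, dist p q ^ (-s)
        En ≤ ENNReal.ofReal (C * (D + 1)) ∧
          ENNReal.ofReal D ≤ ENNReal.ofReal C * (En + 1)) := by
  have : Nonempty (Fin d) := ⟨⟨0, hd⟩⟩
  have hdim : finrank ℝ (EuclideanSpace ℝ (Fin d)) = d := finrank_euclideanSpace_fin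
  obtain ⟨A, hA, hupper⟩ := exists_ballPairEnergy_le volume (hdim ▸ hd) hs0.le (by rwa [hdim])
  obtain ⟨B, hB0, hB, hlower⟩ :=
    exists_le_ballPairEnergy (volume : Measure (EuclideanSpace ℝ (Fin d))) hs0.le
  rw [hdim] at hupper hlower
  set C := max A.toReal B⁻¹.toReal + 1
  refine ⟨C, by positivity, fun n hn P hcard _ hsep => ?_⟩
  intro μP En D
  have hn : 0 < n := by omega
  have hr : (0 : ℝ) < (n : ℝ) ^ (-1 / s) := by positivity
  have hEn : En = ENNReal.ofReal ((n : ℝ)⁻¹ * (n : ℝ) ^ ((d : ℝ) / s)) ^ 2 *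
      ∑ p ∈ P, ∑ q ∈ P, ballPairEnergy volume s ((n : ℝ) ^ (-1 / s)) p q :=
    lintegral_lintegral_thickenedMeasure volume (by positivity) _ s P
  constructor
  · calc En ≤ A * ENNReal.ofReal (D + 1) :=
          hEn ▸ ofReal_sq_mul_sum_sum_le P hn d hsep hs0.ne' hcard (hupper _ hr)
      _ = ENNReal.ofReal (A.toReal * (D + 1)) := by
          rw [ENNReal.ofReal_mul ENNReal.toReal_nonneg, ENNReal.ofReal_toReal hA]
      _ ≤ ENNReal.ofReal (C * (D + 1)) := by
          gcongr
          linarith [le_max_left A.toReal B⁻¹.toReal]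
  · have hBD : B * ENNReal.ofReal D ≤ En :=
      hEn ▸ le_ofReal_sq_mul_sum_sum P hn d hsep (hlower _ hr)
    calc ENNReal.ofReal D ≤ B⁻¹ * En := (ENNReal.mul_le_iff_le_inv hB0 hB).1 hBD
      _ ≤ ENNReal.ofReal C * (En + 1) := by
          gcongr
          · rw [ENNReal.le_ofReal_iff_toReal_le (ENNReal.inv_ne_top.2 hB0) (by positivity)]
            linarith [le_max_right A.toReal B⁻¹.toReal]
          · exact le_self_add
end
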